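/- arXiv:2107.09295 — 2 statements merged into one kernel-verified Lean document; each statement's English description precedes it below -/
import Mathlib

section
/- For every CAT(0) space X there exists a unique topology T_Δ on X with the following two properties: (i) a sequence (x_n) in X converges to a point x with respect to T_Δ if and only if (x_n) is bounded and converges weakly to x; (ii) T_Δ is sequential. -/
open Filter Topology Metric Set

/-- `m` is a midpoint of `x` and `y`. -/
def IsMidpoint {X : Type*} [MetricSpace X] (x y m : X) : Prop :=
  dist x m = dist x y / 2 ∧ dist y m = dist x y / 2

/-- A CAT(0) space: a complete metric space with midpoints satisfying the
CN-inequality of Bruhat–Tits. -/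
def IsCAT0 (X : Type*) [MetricSpace X] : Prop :=
  CompleteSpace X ∧
    (∀ x y : X, ∃ m : X, IsMidpoint x y m) ∧
    (∀ x y z m : X, IsMidpoint x y m →
      dist z m ^ 2 ≤ dist z x ^ 2 / 2 + dist z y ^ 2 / 2 - dist x y ^ 2 / 4)

/-- `G` is a (compact) geodesic segment starting at `x`: the image of an
isometric embedding of a compact interval `[0, L]` whose left endpoint is
mapped to `x`. -/
def IsGeodesicSegmentFrom {X : Type*} [MetricSpace X] (x : X) (G : Set X) : Prop :=
  ∃ (L : ℝ) (γ : ℝ → X), 0 ≤ L ∧ γ 0 = x ∧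
    (∀ s ∈ Icc (0:ℝ) L, ∀ t ∈ Icc (0:ℝ) L, dist (γ s) (γ t) = |s - t|) ∧
    G = γ '' Icc (0:ℝ) L

/-- `G` is a geodesic segment from `x` to `y`. -/
def IsGeodesicSegmentBetween {X : Type*} [MetricSpace X] (x y : X) (G : Set X) : Prop :=
  ∃ γ : ℝ → X, γ 0 = x ∧ γ (dist x y) = y ∧
    (∀ s ∈ Icc (0:ℝ) (dist x y), ∀ t ∈ Icc (0:ℝ) (dist x y),
      dist (γ s) (γ t) = |s - t|) ∧
    G = γ '' Icc (0:ℝ) (dist x y)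

/-- `p` is a nearest point of `C` to `z` (a closest-point projection of `z`
onto `C`). -/
def IsNearestPoint {X : Type*} [MetricSpace X] (z : X) (C : Set X) (p : X) : Prop :=
  p ∈ C ∧ ∀ q ∈ C, dist z p ≤ dist z q

/-- Weak (Δ-)convergence of a net `u` (indexed by a preordered set) to `x`:
for every geodesic segment `G` starting at `x`, the closest-point projections
of the `u i` onto `G` converge to `x` in the metric. -/
def WeakConv {X : Type*} [MetricSpace X] {I : Type*} [Preorder I]
    (u : I → X) (x : X) : Prop :=
  ∀ G : Set X, IsGeodesicSegmentFrom x G →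
    ∀ p : I → X, (∀ i, IsNearestPoint (u i) G (p i)) → Tendsto p atTop (𝓝 x)

/-- The sets that are closed in the weak topology `T_Δ`: sets containing all
weak limits of bounded sequences of their elements. -/
def TdeltaClosed {X : Type*} [MetricSpace X] (A : Set X) : Prop :=
  ∀ u : ℕ → X, (∀ n, u n ∈ A) → Bornology.IsBounded (Set.range u) →
    ∀ x : X, WeakConv u x → x ∈ A

/-- `T` is the weak topology `T_Δ`: its closed sets are exactly the weakly
sequentially closed sets. -/
def IsWeakTopology {X : Type*} [MetricSpace X] (T : TopologicalSpace X) : Prop :=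
  ∀ A : Set X, @IsClosed X T A ↔ TdeltaClosed A

/-- Geodesic convexity of a subset of a metric space. -/
def GeodesicallyConvex {X : Type*} [MetricSpace X] (C : Set X) : Prop :=
  ∀ x ∈ C, ∀ y ∈ C, ∀ G : Set X, IsGeodesicSegmentBetween x y G → G ⊆ C

/-- The coconvex topology `T_co`: the coarsest topology on `X` in which every
metrically closed, (geodesically) convex set is closed. -/
def coconvexTopology (X : Type*) [MetricSpace X] : TopologicalSpace X :=
  TopologicalSpace.generateFrom
    {U : Set X | ∃ C : Set X, IsClosed C ∧ GeodesicallyConvex C ∧ U = Cᶜ}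

/-!
Declaring the `TdeltaClosed` sets closed gives a topology (weak convergence passes to
subsequences) that is sequential and in which bounded weakly convergent sequences converge;
uniqueness holds because a sequential topology is determined by its convergent sequences.
The substance is the converse. A `T_Δ`-convergent sequence is bounded, since otherwise a
subsequence escaping to infinity would be a closed set missing the limit. It converges weakly to
its limit `x`: otherwise some subsequence has projections staying away from `x`, and by
Δ-compactness a further subsequence converges weakly to some `y ≠ x`; this subsequence together
with `y` is again a closed set missing `x`. Δ-compactness is Lim's argument: a subsequence all of
whose subsequences have the same asymptotic radius converges weakly to its asymptotic centre.
Geodesics, unique nearest points on segments and asymptotic centres all come from the CN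
inequality together with completeness.
-/

def SatisfiesCN (X : Type*) [MetricSpace X] : Prop :=
  ∀ x y z m : X, IsMidpoint x y m →
    dist z m ^ 2 ≤ dist z x ^ 2 / 2 + dist z y ^ 2 / 2 - dist x y ^ 2 / 4

theorem IsCAT0.satisfiesCN {X : Type*} [MetricSpace X] (hX : IsCAT0 X) : SatisfiesCN X :=
  hX.2.2

theorem Set.Icc_subset_of_isClosed_of_midpoint_mem {S : Set ℝ} (hS : IsClosed S) {a b : ℝ}
    (ha : a ∈ S) (hb : b ∈ S) (hmid : ∀ s ∈ S, ∀ t ∈ S, (s + t) / 2 ∈ S) : Icc a b ⊆ S := by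
  intro l ⟨hal, hlb⟩
  by_contra hl
  obtain ⟨s, ⟨hsS, has, hsl⟩, hsmax⟩ :=
    (isCompact_Icc.inter_left hS).exists_isGreatest ⟨a, ha, le_rfl, hal⟩
  obtain ⟨t, ⟨htS, hlt, htb⟩, htmin⟩ :=
    (isCompact_Icc.inter_left hS).exists_isLeast ⟨b, hb, hlb, le_rfl⟩
  have hsl' : s < l := hsl.lt_of_ne fun h => hl (h ▸ hsS)
  have hlt' : l < t := hlt.lt_of_ne fun h => hl (h ▸ htS)
  rcases le_total ((s + t) / 2) l with h | h
  · linarith [hsmax ⟨hmid s hsS t htS, by linarith, h⟩]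
  · linarith [htmin ⟨hmid s hsS t htS, h, by linarith⟩]

section GeodesicSegments

variable {X : Type*} [MetricSpace X]

theorem IsGeodesicSegmentFrom.isCompact {x : X} {G : Set X} (hG : IsGeodesicSegmentFrom x G) :
    IsCompact G := by
  obtain ⟨L, γ, -, -, hγ, rfl⟩ := hG
  refine isCompact_Icc.image_of_continuousOn (Metric.continuousOn_iff.2 ?_)
  intro s hs ε hε
  exact ⟨ε, hε, fun t ht hts => by rwa [hγ t ht s hs, ← Real.dist_eq]⟩

theorem IsGeodesicSegmentFrom.mem {x : X} {G : Set X} (hG : IsGeodesicSegmentFrom x G) :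
    x ∈ G := by
  obtain ⟨L, γ, hL, hγ0, -, rfl⟩ := hG
  exact ⟨0, ⟨le_rfl, hL⟩, hγ0⟩

theorem IsGeodesicSegmentFrom.exists_isNearestPoint {x : X} {G : Set X}
    (hG : IsGeodesicSegmentFrom x G) (z : X) : ∃ p, IsNearestPoint z G p := by
  obtain ⟨p, hp, hmin⟩ := hG.isCompact.exists_isMinOn ⟨x, hG.mem⟩
    (continuous_const.dist continuous_id).continuousOn
  exact ⟨p, hp, fun q hq => hmin hq⟩

theorem IsGeodesicSegmentFrom.exists_isMidpoint_mem {x : X} {G : Set X}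
    (hG : IsGeodesicSegmentFrom x G) {p q : X} (hp : p ∈ G) (hq : q ∈ G) :
    ∃ m ∈ G, IsMidpoint p q m := by
  obtain ⟨L, γ, -, -, hγ, rfl⟩ := hG
  obtain ⟨s, hs, rfl⟩ := hp
  obtain ⟨t, ht, rfl⟩ := hq
  have hm : (s + t) / 2 ∈ Icc 0 L := ⟨by linarith [hs.1, ht.1], by linarith [hs.2, ht.2]⟩
  refine ⟨γ ((s + t) / 2), mem_image_of_mem _ hm, ?_, ?_⟩
  · rw [hγ s hs _ hm, hγ s hs t ht, show s - (s + t) / 2 = (s - t) / 2 by ring, abs_div,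
      abs_two]
  · rw [hγ t ht _ hm, hγ s hs t ht, show t - (s + t) / 2 = (t - s) / 2 by ring, abs_div,
      abs_two, abs_sub_comm]

theorem IsGeodesicSegmentBetween.isGeodesicSegmentFrom {x y : X} {G : Set X}
    (hG : IsGeodesicSegmentBetween x y G) : IsGeodesicSegmentFrom x G := by
  obtain ⟨γ, hγ0, -, hγ, rfl⟩ := hG
  exact ⟨_, γ, dist_nonneg, hγ0, hγ, rfl⟩

theorem IsGeodesicSegmentBetween.right_mem {x y : X} {G : Set X}
    (hG : IsGeodesicSegmentBetween x y G) : y ∈ G := by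
  obtain ⟨γ, -, hγd, -, rfl⟩ := hG
  exact ⟨_, ⟨dist_nonneg, le_rfl⟩, hγd⟩

theorem IsGeodesicSegmentBetween.symm {x y : X} {G : Set X}
    (hG : IsGeodesicSegmentBetween x y G) : IsGeodesicSegmentBetween y x G := by
  obtain ⟨γ, hγ0, hγd, hγ, rfl⟩ := hG
  unfold IsGeodesicSegmentBetween
  rw [dist_comm y x]
  set d := dist x y
  have hrefl : ∀ t ∈ Icc 0 d, d - t ∈ Icc 0 d := fun t ht =>
    ⟨by linarith [ht.2], by linarith [ht.1]⟩
  refine ⟨fun t => γ (d - t), by simpa using hγd, by simpa using hγ0, fun s hs t ht => ?_, ?_⟩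
  · rw [hγ _ (hrefl s hs) _ (hrefl t ht), abs_sub_comm]
    ring_nf
  · rw [← image_image γ (d - ·), image_const_sub_Icc, sub_self, sub_zero]

end GeodesicSegments

section NearestPoints

variable {X : Type*} [MetricSpace X]

theorem IsNearestPoint.eq_of_mem {z p : X} {G : Set X} (hp : IsNearestPoint z G p) (hz : z ∈ G) :
    p = z :=
  (dist_le_zero.mp (by simpa using hp.2 z hz)).symm

theorem IsNearestPoint.dist_sq_add_le (hcn : SatisfiesCN X) {x z p q : X} {G : Set X}
    (hG : IsGeodesicSegmentFrom x G) (hp : IsNearestPoint z G p) (hq : q ∈ G) :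
    dist z p ^ 2 + dist p q ^ 2 / 2 ≤ dist z q ^ 2 := by
  obtain ⟨m, hmG, hm⟩ := hG.exists_isMidpoint_mem hp.1 hq
  have hpm : dist z p ^ 2 ≤ dist z m ^ 2 := pow_le_pow_left₀ dist_nonneg (hp.2 m hmG) 2
  linarith [hcn p q z m hm]

theorem IsNearestPoint.unique (hcn : SatisfiesCN X) {x z p q : X} {G : Set X}
    (hG : IsGeodesicSegmentFrom x G) (hp : IsNearestPoint z G p) (hq : IsNearestPoint z G q) :
    p = q := by
  have hpq : dist z p = dist z q := le_antisymm (hp.2 q hq.1) (hq.2 p hp.1)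
  have := hp.dist_sq_add_le hcn hG hq.1
  rw [hpq] at this
  exact dist_le_zero.mp (by nlinarith [dist_nonneg (x := p) (y := q)])

end NearestPoints

section Geodesics

variable {X : Type*} [MetricSpace X]

def OnGeodesicAt (x y : X) (t : ℝ) (z : X) : Prop :=
  dist x z = t ∧ dist z y = dist x y - t

theorem OnGeodesicAt.abs_sub_le_dist {x y z z' : X} {t t' : ℝ} (hz : OnGeodesicAt x y t z)
    (hz' : OnGeodesicAt x y t' z') : |t - t'| ≤ dist z z' := by
  rw [← hz.1, ← hz'.1, dist_comm x z, dist_comm x z']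
  exact abs_dist_sub_le z z' x

theorem OnGeodesicAt.dist_le_of_isMidpoint (hcn : SatisfiesCN X) {x y z z' m : X} {t t' : ℝ}
    (hz : OnGeodesicAt x y t z) (hz' : OnGeodesicAt x y t' z') (hm : IsMidpoint z z' m) :
    dist z z' ≤ |t - t'| := by
  have hx := hcn z z' x m hm
  have hy := hcn z z' y m hm
  rw [hz.1, hz'.1] at hx
  rw [dist_comm y z, dist_comm y z', hz.2, hz'.2] at hy
  by_contra! hlt
  have hsq : (t - t') ^ 2 < dist z z' ^ 2 := by
    rw [← sq_abs]; exact pow_lt_pow_left₀ hlt (abs_nonneg _) two_ne_zero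
  have hxm : dist x m < (t + t') / 2 :=
    lt_of_pow_lt_pow_left₀ 2 (by linarith [hz.1 ▸ dist_nonneg, hz'.1 ▸ dist_nonneg]) (by linarith)
  have hym : dist y m < dist x y - (t + t') / 2 :=
    lt_of_pow_lt_pow_left₀ 2 (by linarith [hz.2 ▸ dist_nonneg, hz'.2 ▸ dist_nonneg]) (by linarith)
  linarith [dist_triangle_right x y m]

theorem OnGeodesicAt.of_isMidpoint (hcn : SatisfiesCN X) {x y z z' m : X} {t t' : ℝ}
    (hz : OnGeodesicAt x y t z) (hz' : OnGeodesicAt x y t' z') (hm : IsMidpoint z z' m) :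
    OnGeodesicAt x y ((t + t') / 2) m := by
  have hD : dist z z' = |t - t'| :=
    le_antisymm (hz.dist_le_of_isMidpoint hcn hz' hm) (hz.abs_sub_le_dist hz')
  have hx := hcn z z' x m hm
  have hy := hcn z z' y m hm
  rw [hz.1, hz'.1, hD, sq_abs] at hx
  rw [dist_comm y z, dist_comm y z', hz.2, hz'.2, hD, sq_abs] at hy
  have hxm : dist x m ≤ (t + t') / 2 :=
    le_of_pow_le_pow_left₀ two_ne_zero (by linarith [hz.1 ▸ dist_nonneg, hz'.1 ▸ dist_nonneg])
      (by linarith)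
  have hym : dist y m ≤ dist x y - (t + t') / 2 :=
    le_of_pow_le_pow_left₀ two_ne_zero (by linarith [hz.2 ▸ dist_nonneg, hz'.2 ▸ dist_nonneg])
      (by linarith)
  have := dist_triangle_right x y m
  constructor <;> linarith [dist_comm m y]

theorem isClosed_setOf_onGeodesicAt (hX : IsCAT0 X) (x y : X) :
    IsClosed {t | ∃ z, OnGeodesicAt x y t z} := by
  have := hX.1
  refine isSeqClosed_iff_isClosed.mp fun l t hl hlt => ?_
  choose z hz using hl
  have hz_cauchy : CauchySeq z := by
    have hl_cauchy := hlt.cauchySeq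
    rw [Metric.cauchySeq_iff] at hl_cauchy ⊢
    intro ε hε
    obtain ⟨N, hN⟩ := hl_cauchy ε hε
    refine ⟨N, fun m hm n hn => ?_⟩
    obtain ⟨c, hc⟩ := hX.2.1 (z m) (z n)
    exact ((hz m).dist_le_of_isMidpoint hX.satisfiesCN (hz n) hc).trans_lt (hN m hm n hn)
  obtain ⟨w, hw⟩ := cauchySeq_tendsto_of_complete hz_cauchy
  refine ⟨w, tendsto_nhds_unique ?_ hlt, tendsto_nhds_unique ?_ (tendsto_const_nhds.sub hlt)⟩
  · exact (tendsto_const_nhds.dist hw).congr fun n => (hz n).1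
  · exact (hw.dist tendsto_const_nhds).congr fun n => (hz n).2

theorem exists_isGeodesicSegmentBetween (hX : IsCAT0 X) (x y : X) :
    ∃ G, IsGeodesicSegmentBetween x y G := by
  have hcn := hX.satisfiesCN
  have hS : Icc 0 (dist x y) ⊆ {t | ∃ z, OnGeodesicAt x y t z} :=
    Icc_subset_of_isClosed_of_midpoint_mem (isClosed_setOf_onGeodesicAt hX x y)
      ⟨x, dist_self x, by simp⟩ ⟨y, rfl, by simp⟩
      fun s ⟨z, hz⟩ t ⟨z', hz'⟩ =>
        let ⟨m, hm⟩ := hX.2.1 z z'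
        ⟨m, hz.of_isMidpoint hcn hz' hm⟩
  have : Nonempty X := ⟨x⟩
  choose! γ hγ using fun t (ht : t ∈ Icc 0 (dist x y)) => hS ht
  have hd := dist_nonneg (x := x) (y := y)
  refine ⟨γ '' Icc 0 (dist x y), γ, ?_, ?_, fun s hs t ht => ?_, rfl⟩
  · exact (dist_eq_zero.mp (hγ 0 ⟨le_rfl, hd⟩).1).symm
  · exact dist_eq_zero.mp (by rw [(hγ _ ⟨hd, le_rfl⟩).2, sub_self])
  · obtain ⟨m, hm⟩ := hX.2.1 (γ s) (γ t)
    exact le_antisymm ((hγ s hs).dist_le_of_isMidpoint hcn (hγ t ht) hm)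
      ((hγ s hs).abs_sub_le_dist (hγ t ht))

end Geodesics

section WeakConvergence

variable {X : Type*} [MetricSpace X]

theorem WeakConv.of_eventually_eq_comp (hcn : SatisfiesCN X) {u v : ℕ → X} {x : X}
    {E : ℕ → ℕ} (hu : WeakConv u x) (hE : Tendsto E atTop atTop)
    (hvu : ∀ᶠ n in atTop, v n = u (E n)) : WeakConv v x := by
  intro G hG q hq
  choose p hp using fun n => hG.exists_isNearestPoint (u n)
  refine ((hu G hG p hp).comp hE).congr' ?_
  filter_upwards [hvu] with n hn
  exact (hp (E n)).unique hcn hG (hn ▸ hq n)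

theorem WeakConv.comp (hcn : SatisfiesCN X) {u : ℕ → X} {x : X} {E : ℕ → ℕ}
    (hu : WeakConv u x) (hE : Tendsto E atTop atTop) : WeakConv (u ∘ E) x :=
  hu.of_eventually_eq_comp hcn hE (Eventually.of_forall fun _ => rfl)

theorem eq_of_weakConv_const (hX : IsCAT0 X) {a x : X} (h : WeakConv (fun _ : ℕ => a) x) :
    a = x := by
  obtain ⟨G, hG⟩ := exists_isGeodesicSegmentBetween hX x a
  exact tendsto_nhds_unique tendsto_const_nhds
    (h G hG.isGeodesicSegmentFrom _ fun _ => ⟨hG.right_mem, fun q _ => by simp⟩)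

theorem WeakConv.eq_of_frequently_eq (hX : IsCAT0 X) {u : ℕ → X} {x b : X} (hu : WeakConv u x)
    (hb : ∃ᶠ n in atTop, u n = b) : b = x := by
  obtain ⟨φ, hφ, hφb⟩ := extraction_of_frequently_atTop hb
  exact eq_of_weakConv_const hX <|
    hu.of_eventually_eq_comp hX.satisfiesCN hφ.tendsto_atTop (Eventually.of_forall (hφb · |>.symm))

theorem WeakConv.unique (hX : IsCAT0 X) {u : ℕ → X} {y z : X} (hy : WeakConv u y)
    (hz : WeakConv u z) : y = z := by
  obtain ⟨G, hG⟩ := exists_isGeodesicSegmentBetween hX y z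
  choose p hp using fun n => hG.isGeodesicSegmentFrom.exists_isNearestPoint (u n)
  exact tendsto_nhds_unique (hy G hG.isGeodesicSegmentFrom p hp)
    (hz G hG.symm.isGeodesicSegmentFrom p hp)

end WeakConvergence

section AsymptoticRadius

variable {X : Type*} [MetricSpace X]

/-- The asymptotic radius of `u` about `y`, squared so that the CN inequality passes to the
limit. -/
noncomputable def limsupDistSq (u : ℕ → X) (y : X) : ℝ :=
  limsup (fun n => dist y (u n) ^ 2) atTop

noncomputable def asymptoticRadiusSq (u : ℕ → X) : ℝ :=
  ⨅ y, limsupDistSq u y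

theorem isBoundedUnder_dist_sq {u : ℕ → X} (hu : Bornology.IsBounded (range u)) (y : X) :
    IsBoundedUnder (· ≤ ·) atTop (fun n => dist y (u n) ^ 2) := by
  obtain ⟨r, hr⟩ := hu.subset_closedBall y
  refine isBoundedUnder_of ⟨r ^ 2, fun n => pow_le_pow_left₀ dist_nonneg ?_ 2⟩
  rw [dist_comm]
  exact hr (mem_range_self n)

theorem limsupDistSq_nonneg {u : ℕ → X} (hu : Bornology.IsBounded (range u)) (y : X) :
    0 ≤ limsupDistSq u y :=
  le_limsup_of_frequently_le (Frequently.of_forall fun _ => sq_nonneg _)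
    (isBoundedUnder_dist_sq hu y)

theorem eventually_dist_sq_lt {u : ℕ → X} (hu : Bornology.IsBounded (range u)) {y : X} {c : ℝ}
    (h : limsupDistSq u y < c) : ∀ᶠ n in atTop, dist y (u n) ^ 2 < c :=
  eventually_lt_of_limsup_lt h (isBoundedUnder_dist_sq hu y)

theorem limsupDistSq_le {u : ℕ → X} {y : X} {c : ℝ}
    (h : ∀ ε > 0, ∀ᶠ n in atTop, dist y (u n) ^ 2 ≤ c + ε) : limsupDistSq u y ≤ c :=
  le_of_forall_pos_le_add fun ε hε =>
    limsup_le_of_le (isCoboundedUnder_le_of_le atTop fun _ => sq_nonneg _) (h ε hε)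

theorem limsupDistSq_le_of_isMidpoint (hcn : SatisfiesCN X) {u : ℕ → X}
    (hu : Bornology.IsBounded (range u)) {y z m : X} (hm : IsMidpoint y z m) :
    limsupDistSq u m ≤ limsupDistSq u y / 2 + limsupDistSq u z / 2 - dist y z ^ 2 / 4 := by
  refine limsupDistSq_le fun ε hε => ?_
  filter_upwards [eventually_dist_sq_lt hu (lt_add_of_pos_right (limsupDistSq u y) hε),
    eventually_dist_sq_lt hu (lt_add_of_pos_right (limsupDistSq u z) hε)] with n hy hz
  have := hcn y z (u n) m hm
  rw [dist_comm (u n) m, dist_comm (u n) y, dist_comm (u n) z] at this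
  linarith

theorem limsupDistSq_le_add {u : ℕ → X} (hu : Bornology.IsBounded (range u)) (y : X) {z : X}
    {B : ℝ} (hB : ∀ n, dist z (u n) ≤ B) :
    limsupDistSq u z ≤ limsupDistSq u y + dist y z * (3 * dist y z + 2 * B) := by
  refine limsupDistSq_le fun ε hε => ?_
  filter_upwards [eventually_dist_sq_lt hu (lt_add_of_pos_right (limsupDistSq u y) hε)] with n hn
  have h1 : dist z (u n) ≤ dist y z + dist y (u n) := dist_triangle_left _ _ _
  have h2 : dist y (u n) ≤ dist y z + B := (dist_triangle _ z _).trans (by linarith [hB n])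
  nlinarith [dist_nonneg (x := y) (y := z), dist_nonneg (x := z) (y := u n),
    dist_nonneg (x := y) (y := u n)]

theorem limsupDistSq_le_of_eventually_eq_comp {v w : ℕ → X} (hw : Bornology.IsBounded (range w))
    {E : ℕ → ℕ} (hE : Tendsto E atTop atTop) (hvw : ∀ᶠ n in atTop, v n = w (E n)) (y : X) :
    limsupDistSq v y ≤ limsupDistSq w y := by
  refine limsupDistSq_le fun ε hε => ?_
  filter_upwards [hvw, hE.eventually
    (eventually_dist_sq_lt hw (lt_add_of_pos_right (limsupDistSq w y) hε))] with n h1 h2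
  rw [h1]
  exact h2.le

theorem asymptoticRadiusSq_nonneg {u : ℕ → X} (hu : Bornology.IsBounded (range u)) :
    0 ≤ asymptoticRadiusSq u :=
  Real.iInf_nonneg (limsupDistSq_nonneg hu)

theorem asymptoticRadiusSq_le {u : ℕ → X} (hu : Bornology.IsBounded (range u)) (y : X) :
    asymptoticRadiusSq u ≤ limsupDistSq u y :=
  ciInf_le ⟨0, by rintro _ ⟨y, rfl⟩; exact limsupDistSq_nonneg hu y⟩ y

theorem asymptoticRadiusSq_le_of_eventually_eq_comp {v w : ℕ → X}
    (hv : Bornology.IsBounded (range v)) (hw : Bornology.IsBounded (range w)) {E : ℕ → ℕ}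
    (hE : Tendsto E atTop atTop) (hvw : ∀ᶠ n in atTop, v n = w (E n)) :
    asymptoticRadiusSq v ≤ asymptoticRadiusSq w :=
  have : Nonempty X := ⟨w 0⟩
  le_ciInf fun y => (asymptoticRadiusSq_le hv y).trans
    (limsupDistSq_le_of_eventually_eq_comp hw hE hvw y)

theorem exists_limsupDistSq_eq_asymptoticRadiusSq (hX : IsCAT0 X) {u : ℕ → X}
    (hu : Bornology.IsBounded (range u)) : ∃ c, limsupDistSq u c = asymptoticRadiusSq u := by
  have := hX.1
  have : Nonempty X := ⟨u 0⟩
  set r := asymptoticRadiusSq u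
  set e : ℕ → ℝ := fun k => 1 / (k + 1)
  have he : Tendsto e atTop (𝓝 0) := tendsto_one_div_add_atTop_nhds_zero_nat
  have he_anti : Antitone e := fun k l hkl => by
    simp only [e]; gcongr
  choose y hy using fun k => exists_lt_of_ciInf_lt (lt_add_of_pos_right r (by positivity : 0 < e k))
  have hy_dist : ∀ k l, dist (y k) (y l) ^ 2 ≤ 2 * e k + 2 * e l := by
    intro k l
    obtain ⟨m, hm⟩ := hX.2.1 (y k) (y l)
    linarith [limsupDistSq_le_of_isMidpoint hX.satisfiesCN hu hm, asymptoticRadiusSq_le hu m,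
      hy k, hy l]
  have hy_cauchy : CauchySeq y := by
    refine cauchySeq_of_le_tendsto_0 (fun N => √(4 * e N)) (fun k l N hk hl => ?_)
      (by simpa using (he.const_mul 4).sqrt)
    refine Real.le_sqrt_of_sq_le ((hy_dist k l).trans ?_)
    linarith [he_anti hk, he_anti hl]
  obtain ⟨c, hc⟩ := cauchySeq_tendsto_of_complete hy_cauchy
  obtain ⟨B, hB⟩ := hu.subset_closedBall c
  have hle : ∀ k, limsupDistSq u c ≤ r + e k + dist (y k) c * (3 * dist (y k) c + 2 * B) :=
    fun k => (limsupDistSq_le_add hu (y k) fun n => by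
      rw [dist_comm]; exact hB (mem_range_self n)).trans (by linarith [hy k])
  have hδ : Tendsto (fun k => dist (y k) c) atTop (𝓝 0) := tendsto_iff_dist_tendsto_zero.mp hc
  have hlim : Tendsto (fun k => r + e k + dist (y k) c * (3 * dist (y k) c + 2 * B)) atTop
      (𝓝 r) := by
    simpa using (tendsto_const_nhds.add he).add (hδ.mul ((hδ.const_mul 3).add_const (2 * B)))
  exact ⟨c, le_antisymm (ge_of_tendsto' hlim hle) (asymptoticRadiusSq_le hu c)⟩

end AsymptoticRadius

section DeltaCompactness

variable {X : Type*} [MetricSpace X]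

theorem exists_diagonal_subsequence (π : (ℕ → ℕ) → ℕ → ℕ → ℕ)
    (hπ : ∀ φ k, StrictMono (π φ k)) :
    ∃ Φ : ℕ → ℕ → ℕ, (∀ k, Φ (k + 1) = Φ k ∘ π (Φ k) k) ∧ StrictMono (fun n => Φ n n) ∧
      ∀ k, ∃ E, Tendsto E atTop atTop ∧ ∀ n, k ≤ n → Φ n n = Φ k (E n) := by
  let Φ : ℕ → ℕ → ℕ := fun k => Nat.rec id (fun k φ => φ ∘ π φ k) k
  have hΦ_mono : ∀ k, StrictMono (Φ k) := fun k =>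
    Nat.rec strictMono_id (fun k h => h.comp (hπ _ k)) k
  have hΦ_factor : ∀ k n, k ≤ n → ∀ m, ∃ e, m ≤ e ∧ Φ n m = Φ k e := by
    intro k n hkn
    induction n, hkn using Nat.le_induction with
    | base => exact fun m => ⟨m, le_rfl, rfl⟩
    | succ n _ ih =>
      intro m
      obtain ⟨e, hme, he⟩ := ih (π (Φ n) n m)
      exact ⟨e, (hπ _ n).le_apply.trans hme, he⟩
  refine ⟨Φ, fun k => rfl, strictMono_nat_of_lt_succ fun n =>
    hΦ_mono n (Nat.lt_of_succ_le (hπ (Φ n) n).le_apply), fun k => ?_⟩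
  choose! E hE using fun n (hn : k ≤ n) => hΦ_factor k n hn n
  exact ⟨E, tendsto_atTop_mono' atTop ((eventually_ge_atTop k).mono fun n hn => (hE n hn).1)
    tendsto_id, fun n hn => (hE n hn).2⟩

/-- `δ` is the diagonal of successive subsequences, each nearly minimising `G` among the
subsequences of the previous one. -/
theorem exists_strictMono_forall_tendsto_comp_eq {G : (ℕ → ℕ) → ℝ} (hG0 : ∀ φ, 0 ≤ G φ)
    (hG : ∀ φ φ' E, Tendsto E atTop atTop → (∀ᶠ n in atTop, φ n = φ' (E n)) → G φ ≤ G φ') :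
    ∃ δ, StrictMono δ ∧ ∀ ψ, Tendsto ψ atTop atTop → G (δ ∘ ψ) = G δ := by
  let σ : (ℕ → ℕ) → ℝ := fun φ => ⨅ E : {E : ℕ → ℕ // Tendsto E atTop atTop}, G (φ ∘ E.1)
  have hσ_le : ∀ φ E, Tendsto E atTop atTop → σ φ ≤ G (φ ∘ E) := fun φ E hE =>
    ciInf_le (f := fun E : {E : ℕ → ℕ // Tendsto E atTop atTop} => G (φ ∘ E.1))
      ⟨0, by rintro _ ⟨_, rfl⟩; exact hG0 _⟩ ⟨E, hE⟩
  have hπ : ∀ (φ : ℕ → ℕ) (k : ℕ), ∃ π, StrictMono π ∧ G (φ ∘ π) < σ φ + 1 / (k + 1) := by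
    intro φ k
    have : Nonempty {E : ℕ → ℕ // Tendsto E atTop atTop} := ⟨⟨id, tendsto_id⟩⟩
    obtain ⟨⟨E, hE⟩, hlt⟩ := exists_lt_of_ciInf_lt
      (lt_add_of_pos_right (σ φ) (by positivity : (0 : ℝ) < 1 / (k + 1)))
    obtain ⟨θ, hθ, hEθ⟩ := strictMono_subseq_of_tendsto_atTop hE
    exact ⟨E ∘ θ, hEθ,
      (hG _ _ θ hθ.tendsto_atTop (Eventually.of_forall fun _ => rfl)).trans_lt hlt⟩
  choose π hπ_mono hπ using hπ
  obtain ⟨Φ, hΦ, hδ, htail⟩ := exists_diagonal_subsequence π hπ_mono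
  refine ⟨fun n => Φ n n, hδ, fun ψ hψ =>
    le_antisymm (hG _ _ ψ hψ (Eventually.of_forall fun _ => rfl)) ?_⟩
  refine le_of_forall_pos_le_add fun ε hε => le_of_lt ?_
  obtain ⟨k, hk⟩ := exists_nat_one_div_lt hε
  obtain ⟨E, hE, hδE⟩ := htail (k + 1)
  obtain ⟨E', hE', hδE'⟩ := htail k
  calc G (fun n => Φ n n) ≤ G (Φ (k + 1)) := hG _ _ E hE ((eventually_ge_atTop _).mono hδE)
    _ < σ (Φ k) + 1 / (k + 1) := hΦ k ▸ hπ _ _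
    _ ≤ G (Φ k ∘ (E' ∘ ψ)) + 1 / (k + 1) := by gcongr; exact hσ_le _ _ (hE'.comp hψ)
    _ ≤ G ((fun n => Φ n n) ∘ ψ) + 1 / (k + 1) := by
      gcongr
      exact hG _ _ id tendsto_id ((hψ.eventually_ge_atTop k).mono fun n hn => (hδE' _ hn).symm)
    _ ≤ G ((fun n => Φ n n) ∘ ψ) + ε := by linarith

theorem limsupDistSq_add_le_of_tendsto_isNearestPoint (hcn : SatisfiesCN X) {v : ℕ → X}
    (hv : Bornology.IsBounded (range v)) {c : X} {G : Set X} (hG : IsGeodesicSegmentFrom c G)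
    {p : ℕ → X} (hp : ∀ n, IsNearestPoint (v n) G (p n)) {g : X} (hpg : Tendsto p atTop (𝓝 g)) :
    limsupDistSq v g + dist g c ^ 2 / 2 ≤ limsupDistSq v c := by
  obtain ⟨B, hB⟩ := hv.subset_closedBall c
  have hpt : ∀ n, dist g (v n) ^ 2 ≤
      dist c (v n) ^ 2 + (dist g (p n) * (dist g (p n) + 2 * B) - dist (p n) c ^ 2 / 2) := by
    intro n
    have hpyth := (hp n).dist_sq_add_le hcn hG hG.mem
    have hvp : dist (v n) (p n) ≤ B :=
      ((hp n).2 c hG.mem).trans (by rw [← mem_closedBall]; exact hB (mem_range_self _))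
    have htri : dist g (v n) ≤ dist g (p n) + dist (v n) (p n) := dist_triangle_right _ _ _
    rw [dist_comm c]
    nlinarith [dist_nonneg (x := g) (y := p n), dist_nonneg (x := g) (y := v n),
      dist_nonneg (x := v n) (y := p n)]
  have he : Tendsto (fun n => dist g (p n) * (dist g (p n) + 2 * B) - dist (p n) c ^ 2 / 2)
      atTop (𝓝 (-(dist g c ^ 2 / 2))) := by
    have h1 : Tendsto (fun n => dist g (p n)) atTop (𝓝 0) := by
      simpa using (tendsto_const_nhds (x := g)).dist hpg
    simpa using (h1.mul (h1.add_const (2 * B))).sub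
      (((hpg.dist tendsto_const_nhds).pow 2).div_const 2)
  suffices limsupDistSq v g ≤ limsupDistSq v c - dist g c ^ 2 / 2 by linarith
  refine limsupDistSq_le fun ε hε => ?_
  filter_upwards [eventually_dist_sq_lt hv (lt_add_of_pos_right (limsupDistSq v c) (half_pos hε)),
    he.eventually (gt_mem_nhds (lt_add_of_pos_right _ (half_pos hε)))] with n h1 h2
  linarith [hpt n]

theorem weakConv_of_limsupDistSq_eq (hcn : SatisfiesCN X) {v : ℕ → X}
    (hv : Bornology.IsBounded (range v))
    (hreg : ∀ ψ, Tendsto ψ atTop atTop → asymptoticRadiusSq (v ∘ ψ) = asymptoticRadiusSq v)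
    {c : X} (hc : limsupDistSq v c = asymptoticRadiusSq v) : WeakConv v c := by
  intro G hG p hp
  refine hG.isCompact.tendsto_nhds_of_unique_mapClusterPt (Eventually.of_forall fun n => (hp n).1)
    fun g _ hg => ?_
  obtain ⟨ψ, hψ, hpψ⟩ := hg.tendsto_subseq
  have hw : Bornology.IsBounded (range (v ∘ ψ)) := hv.subset (range_comp_subset_range ψ v)
  have hgc := limsupDistSq_add_le_of_tendsto_isNearestPoint hcn hw hG (fun n => hp (ψ n)) hpψ
  have hcv : limsupDistSq (v ∘ ψ) c ≤ limsupDistSq v c :=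
    limsupDistSq_le_of_eventually_eq_comp (v := v ∘ ψ) hv hψ.tendsto_atTop
      (Eventually.of_forall fun _ => rfl) c
  have hrad := asymptoticRadiusSq_le hw g
  rw [hreg ψ hψ.tendsto_atTop] at hrad
  exact dist_le_zero.mp (by nlinarith [dist_nonneg (x := g) (y := c)])

theorem exists_strictMono_weakConv (hX : IsCAT0 X) {u : ℕ → X}
    (hu : Bornology.IsBounded (range u)) : ∃ φ : ℕ → ℕ, StrictMono φ ∧ ∃ c, WeakConv (u ∘ φ) c := by
  have hsub : ∀ φ : ℕ → ℕ, Bornology.IsBounded (range (u ∘ φ)) := fun φ =>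
    hu.subset (range_comp_subset_range φ u)
  obtain ⟨δ, hδ, hreg⟩ := exists_strictMono_forall_tendsto_comp_eq
    (G := fun φ => asymptoticRadiusSq (u ∘ φ)) (fun φ => asymptoticRadiusSq_nonneg (hsub φ))
    fun φ φ' E hE h => asymptoticRadiusSq_le_of_eventually_eq_comp (hsub φ) (hsub φ') hE
      (h.mono fun n hn => by simp [hn])
  obtain ⟨c, hc⟩ := exists_limsupDistSq_eq_asymptoticRadiusSq hX (hsub δ)
  exact ⟨δ, hδ, c, weakConv_of_limsupDistSq_eq hX.satisfiesCN (hsub δ) hreg hc⟩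

end DeltaCompactness

section WeakTopology

variable {X : Type*} [MetricSpace X]

theorem TdeltaClosed.mem_of_frequently (hcn : SatisfiesCN X) {A : Set X} (hA : TdeltaClosed A)
    {u : ℕ → X} {x : X} (hu : ∃ᶠ n in atTop, u n ∈ A) (hb : Bornology.IsBounded (range u))
    (hx : WeakConv u x) : x ∈ A := by
  obtain ⟨φ, hφ, hφA⟩ := extraction_of_frequently_atTop hu
  exact hA (u ∘ φ) hφA (hb.subset (range_comp_subset_range φ u)) x (hx.comp hcn hφ.tendsto_atTop)

theorem TdeltaClosed.union (hcn : SatisfiesCN X) {A B : Set X} (hA : TdeltaClosed A)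
    (hB : TdeltaClosed B) : TdeltaClosed (A ∪ B) := by
  intro u hu hb x hx
  rcases frequently_or_distrib.mp (Frequently.of_forall (f := atTop) hu) with h | h
  · exact Or.inl (hA.mem_of_frequently hcn h hb hx)
  · exact Or.inr (hB.mem_of_frequently hcn h hb hx)

@[reducible] def weakTopology (hcn : SatisfiesCN X) : TopologicalSpace X :=
  TopologicalSpace.ofClosed {A | TdeltaClosed A} (fun _ hu => (hu 0).elim)
    (fun _ hS u hu hb x hx A hA => hS hA u (fun n => hu n A hA) hb x hx)
    (fun _ hA _ hB => hA.union hcn hB)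

theorem isWeakTopology_weakTopology (hcn : SatisfiesCN X) : IsWeakTopology (weakTopology hcn) :=
  fun A => by
    rw [← @isOpen_compl_iff X A (weakTopology hcn)]
    show TdeltaClosed Aᶜᶜ ↔ _
    rw [compl_compl]

theorem IsWeakTopology.ext {T T' : TopologicalSpace X} (hT : IsWeakTopology T)
    (hT' : IsWeakTopology T') : T = T' :=
  TopologicalSpace.ext_iff_isClosed.mpr fun A => (hT A).trans (hT' A).symm

theorem tdeltaClosed_range_of_tendsto_dist (hX : IsCAT0 X) {v : ℕ → X} {x : X}
    (hv : Tendsto (fun k => dist x (v k)) atTop atTop) : TdeltaClosed (range v) := by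
  intro s hs hb z hz
  choose k hk using hs
  obtain ⟨r, hr⟩ := hb.subset_closedBall x
  obtain ⟨K, hK⟩ := eventually_atTop.mp (hv.eventually_gt_atTop r)
  have hkK : ∀ n, k n < K := fun n => by
    by_contra! hn
    have := hK _ hn
    rw [hk n] at this
    exact (mem_closedBall'.mp (hr (mem_range_self n))).not_gt this
  obtain ⟨j, -, hj⟩ := (finite_Iio K).frequently_exists (l := atTop) (p := fun j n => k n = j) |>.mp
    (Frequently.of_forall fun n => ⟨k n, hkK n, rfl⟩)
  exact ⟨j, hz.eq_of_frequently_eq hX (hj.mono fun n hn => by rw [← hk n, hn])⟩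

theorem tdeltaClosed_insert_range (hX : IsCAT0 X) {w : ℕ → X} {y : X} (hw : WeakConv w y) :
    TdeltaClosed (insert y (range w)) := by
  intro s hs _ z hz
  by_cases hrep : ∃ b, ∃ᶠ n in atTop, s n = b
  · obtain ⟨b, hsb⟩ := hrep
    obtain ⟨n, hn⟩ := hsb.exists
    exact hz.eq_of_frequently_eq hX hsb ▸ hn ▸ hs n
  simp only [not_exists, not_frequently] at hrep
  have : ∀ n, ∃ j, s n ≠ y → w j = s n := fun n =>
    (hs n).elim (fun h => ⟨0, fun h' => (h' h).elim⟩) fun ⟨j, hj⟩ => ⟨j, fun _ => hj⟩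
  choose k hk using this
  have hsk : ∀ᶠ n in atTop, s n = w (k n) := (hrep y).mono fun n hn => (hk n hn).symm
  have hk_tendsto : Tendsto k atTop atTop := tendsto_atTop.mpr fun j => by
    filter_upwards [hsk, (Finset.range j).eventually_all.mpr fun i _ => hrep (w i)] with n hn hnw
    by_contra! hlt
    exact hnw (k n) (Finset.mem_range.mpr hlt) hn
  exact Or.inl ((hw.of_eventually_eq_comp hX.satisfiesCN hk_tendsto hsk).unique hX hz).symm

theorem IsWeakTopology.tendsto_of_weakConv (hcn : SatisfiesCN X) {T : TopologicalSpace X}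
    (hT : IsWeakTopology T) {u : ℕ → X} {x : X} (hb : Bornology.IsBounded (range u))
    (hx : WeakConv u x) : Tendsto u atTop (@nhds X T x) := by
  refine (@_root_.tendsto_nhds X T ℕ x u atTop).mpr fun U hU hxU => ?_
  by_contra h
  exact (hT Uᶜ |>.mp (@IsOpen.isClosed_compl X T U hU)).mem_of_frequently hcn
    (not_eventually.mp h) hb hx hxU

theorem IsWeakTopology.sequentialSpace (hcn : SatisfiesCN X) {T : TopologicalSpace X}
    (hT : IsWeakTopology T) : @SequentialSpace X T :=
  ⟨fun A hA => (hT A).mpr fun _ hu hb _ hx => hA hu (hT.tendsto_of_weakConv hcn hb hx)⟩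

theorem isWeakTopology_of_sequentialSpace {T : TopologicalSpace X} (hseq : @SequentialSpace X T)
    (hT : ∀ (u : ℕ → X) (x : X),
      Tendsto u atTop (@nhds X T x) ↔ Bornology.IsBounded (range u) ∧ WeakConv u x) :
    IsWeakTopology T := fun A => by
  rw [← @isSeqClosed_iff_isClosed X T hseq]
  exact ⟨fun h u hu hb x hx => h hu ((hT u x).mpr ⟨hb, hx⟩),
    fun h u x hu hux => h u hu ((hT u x).mp hux).1 x ((hT u x).mp hux).2⟩

theorem IsWeakTopology.isBounded_range_of_tendsto (hX : IsCAT0 X) {T : TopologicalSpace X}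
    (hT : IsWeakTopology T) {u : ℕ → X} {x : X} (h : Tendsto u atTop (@nhds X T x)) :
    Bornology.IsBounded (range u) := by
  by_contra hu
  have hfreq : ∀ k : ℕ, ∃ᶠ n in atTop, (k : ℝ) < dist x (u n) := by
    intro k
    by_contra! hk
    obtain ⟨C, hC⟩ := (isBoundedUnder_of_eventually_le hk).bddAbove_range
    exact hu (isBounded_closedBall.subset (range_subset_iff.mpr fun n =>
      mem_closedBall'.mpr (hC (mem_range_self n))))
  obtain ⟨φ, hφ, hφx⟩ := extraction_forall_of_frequently hfreq
  have hA : IsClosed[T] (range (u ∘ φ)) := (hT _).mpr <| tdeltaClosed_range_of_tendsto_dist hX <|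
    tendsto_atTop_mono (fun k => (hφx k).le) tendsto_natCast_atTop_atTop
  have hxA : x ∉ range (u ∘ φ) := by
    rintro ⟨k, hk⟩
    have := hφx k
    rw [Function.comp_apply] at hk
    rw [hk, dist_self] at this
    exact (Nat.cast_nonneg k).not_gt this
  obtain ⟨k, hk⟩ :=
    (hφ.tendsto_atTop.eventually
      (h.eventually (@IsOpen.mem_nhds X T _ _ hA.isOpen_compl hxA))).exists
  exact hk ⟨k, rfl⟩

theorem IsWeakTopology.weakConv_of_tendsto (hX : IsCAT0 X) {T : TopologicalSpace X}
    (hT : IsWeakTopology T) {u : ℕ → X} {x : X} (h : Tendsto u atTop (@nhds X T x)) :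
    WeakConv u x := by
  intro G hG p hp
  by_contra hpx
  obtain ⟨U, hU, hfreq⟩ := not_tendsto_iff_exists_frequently_notMem.mp hpx
  obtain ⟨φ, hφ, hφU⟩ := extraction_of_frequently_atTop hfreq
  obtain ⟨ψ, hψ, y, hy⟩ := exists_strictMono_weakConv hX
    ((hT.isBounded_range_of_tendsto hX h).subset (range_comp_subset_range φ u))
  have hyx : y ≠ x := by
    rintro rfl
    obtain ⟨n, hn⟩ := ((hy G hG _ fun n => hp (φ (ψ n))).eventually hU).exists
    exact hφU (ψ n) hn
  have hxw : x ∉ range (u ∘ φ ∘ ψ) := by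
    rintro ⟨n, hn⟩
    have hpn := hp (φ (ψ n))
    rw [show u (φ (ψ n)) = x from hn] at hpn
    -- `T` is a local instance here, so the metric neighbourhood `U` is unpacked by hand.
    obtain ⟨ε, hε, hεU⟩ := Metric.mem_nhds_iff.mp hU
    exact hφU (ψ n) (hpn.eq_of_mem hG.mem ▸ hεU (mem_ball_self hε))
  have hB : IsClosed[T] (insert y (range (u ∘ φ ∘ ψ))) :=
    (hT _).mpr (tdeltaClosed_insert_range hX hy)
  have hxB : x ∉ insert y (range (u ∘ φ ∘ ψ)) := by
    simp only [mem_insert_iff, not_or]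
    exact ⟨hyx.symm, hxw⟩
  obtain ⟨n, hn⟩ := ((hφ.comp hψ).tendsto_atTop.eventually
    (h.eventually (@IsOpen.mem_nhds X T _ _ hB.isOpen_compl hxB))).exists
  exact hn (Or.inr ⟨n, rfl⟩)

theorem IsWeakTopology.tendsto_nhds_iff (hX : IsCAT0 X) {T : TopologicalSpace X}
    (hT : IsWeakTopology T) (u : ℕ → X) (x : X) :
    Tendsto u atTop (@nhds X T x) ↔ Bornology.IsBounded (range u) ∧ WeakConv u x :=
  ⟨fun h => ⟨hT.isBounded_range_of_tendsto hX h, hT.weakConv_of_tendsto hX h⟩,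
    fun h => hT.tendsto_of_weakConv hX.satisfiesCN h.1 h.2⟩

end WeakTopology

/-- For every CAT(0) space `X` there is a unique topology
`T_Δ` such that a sequence converges in `T_Δ` iff it is bounded and converges
weakly, and `T_Δ` is sequential. -/
theorem weak_topology_exists_unique (X : Type*) [MetricSpace X] (hX : IsCAT0 X) :
    ∃! T : TopologicalSpace X,
      (∀ (u : ℕ → X) (x : X),
          Filter.Tendsto u Filter.atTop (@nhds X T x) ↔
            Bornology.IsBounded (Set.range u) ∧ WeakConv u x) ∧
      @SequentialSpace X T := by
  have hW := isWeakTopology_weakTopology hX.satisfiesCN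
  refine ⟨weakTopology hX.satisfiesCN, ⟨hW.tendsto_nhds_iff hX, hW.sequentialSpace hX.satisfiesCN⟩,
    fun T ⟨hT, hseq⟩ => ?_⟩
  exact (isWeakTopology_of_sequentialSpace hseq hT).ext hW
end

section
/- For every CAT(0) space X, the weak topology T_Δ is finer than the coconvex topology T_co and coarser than the metric topology: T_co ⊆ T_Δ ⊆ T_metric (every T_co-open set is T_Δ-open, and every T_Δ-open set is open in the metric topology). -/
open Filter Topology Metric Set

set_option linter.unusedSectionVars false
section Dyadic
variable {X : Type*} [MetricSpace X]

noncomputable def dych (m : X → X → X) (x y : X) : ℕ → ℕ → X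
  | 0, k => if k = 0 then x else y
  | (n+1), k =>
      if k % 2 = 0 then dych m x y n (k / 2)
      else m (dych m x y n (k / 2)) (dych m x y n (k / 2 + 1))

variable (m : X → X → X) (x y : X)

lemma dych_zero : ∀ n, dych m x y n 0 = x := by
  intro n; induction n with
  | zero => simp [dych]
  | succ n ih => simp [dych, ih]

lemma dych_top : ∀ n, dych m x y n (2^n) = y := by
  intro n; induction n with
  | zero => simp [dych]
  | succ n ih =>
      have h1 : 2^(n+1) % 2 = 0 := by omega
      have h2 : 2^(n+1) / 2 = 2^n := by omega
      simp [dych, h1, h2, ih]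

lemma dych_even (n k : ℕ) : dych m x y (n+1) (2*k) = dych m x y n k := by
  have h1 : (2*k) % 2 = 0 := by omega
  have h2 : (2*k) / 2 = k := by omega
  simp [dych, h1, h2]

lemma dych_odd (n k : ℕ) :
    dych m x y (n+1) (2*k+1) = m (dych m x y n k) (dych m x y n (k+1)) := by
  have h1 : (2*k+1) % 2 = 1 := by omega
  have h2 : (2*k+1) / 2 = k := by omega
  simp [dych, h1, h2]

variable (hm : ∀ a b : X, IsMidpoint a b (m a b))

include hm in
lemma dych_step : ∀ n k, k < 2^n →
    dist (dych m x y n k) (dych m x y n (k+1)) = dist x y / 2^n := by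
  intro n; induction n with
  | zero =>
      intro k hk
      interval_cases k
      simp [dych]
  | succ n ih =>
      intro k hk
      rcases Nat.even_or_odd k with ⟨j, hj⟩ | ⟨j, hj⟩
      · subst hj
        have hj2 : j < 2^n := by
          have := hk; rw [pow_succ] at this; omega
        rw [show j + j = 2*j by ring, dych_even, show 2*j+1 = 2*j+1 from rfl, dych_odd]
        have := (hm (dych m x y n j) (dych m x y n (j+1))).1
        rw [this, ih j hj2]
        rw [pow_succ]; ring
      · subst hj
        have hj2 : j < 2^n := by
          have := hk; rw [pow_succ] at this; omega
        rw [dych_odd, show 2*j+1+1 = 2*(j+1) by ring, dych_even]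
        have := (hm (dych m x y n j) (dych m x y n (j+1))).2
        rw [dist_comm, this, ih j hj2]
        rw [pow_succ]; ring

lemma dych_lift (n k : ℕ) : ∀ j, dych m x y (n+j) (k * 2^j) = dych m x y n k := by
  intro j; induction j with
  | zero => simp
  | succ j ih =>
      have : k * 2^(j+1) = 2 * (k * 2^j) := by ring
      rw [show n + (j+1) = (n+j)+1 from rfl, this, dych_even, ih]

include hm in
lemma dych_le : ∀ n k j, k + j ≤ 2^n →
    dist (dych m x y n k) (dych m x y n (k+j)) ≤ j * (dist x y / 2^n) := by
  intro n k j
  induction j with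
  | zero => simp
  | succ j ih =>
      intro h
      have h1 : k + j ≤ 2^n := by omega
      have h2 : k + j < 2^n := by omega
      calc dist (dych m x y n k) (dych m x y n (k+(j+1)))
          ≤ dist (dych m x y n k) (dych m x y n (k+j))
            + dist (dych m x y n (k+j)) (dych m x y n (k+j+1)) := by
            rw [show k+(j+1) = (k+j)+1 from rfl]; exact dist_triangle _ _ _
        _ ≤ j * (dist x y / 2^n) + dist x y / 2^n := by
            have := dych_step m x y hm n (k+j) h2
            rw [this]; linarith [ih h1]
        _ = (j+1 : ℕ) * (dist x y / 2^n) := by push_cast; ring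

include hm in
lemma dych_dist {n k l : ℕ} (hkl : k ≤ l) (hl : l ≤ 2^n) :
    dist (dych m x y n k) (dych m x y n l) = ((l : ℝ) - k) * (dist x y / 2^n) := by
  obtain ⟨j, rfl⟩ : ∃ j, l = k + j := ⟨l - k, by omega⟩
  have h1 : dist (dych m x y n 0) (dych m x y n (0+k)) ≤ k * (dist x y / 2^n) :=
    dych_le m x y hm n 0 k (by omega)
  have h2 : dist (dych m x y n k) (dych m x y n (k+j)) ≤ j * (dist x y / 2^n) :=
    dych_le m x y hm n k j hl
  have h3 : dist (dych m x y n (k+j)) (dych m x y n ((k+j) + (2^n - (k+j)))) ≤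
      (2^n - (k+j) : ℕ) * (dist x y / 2^n) := dych_le m x y hm n (k+j) _ (by omega)
  rw [show (k+j) + (2^n - (k+j)) = 2^n by omega, dych_top] at h3
  rw [dych_zero] at h1
  have h4 : dist x y ≤ dist x (dych m x y n k) + dist (dych m x y n k) (dych m x y n (k+j))
      + dist (dych m x y n (k+j)) y := by
    have := dist_triangle4 x (dych m x y n k) (dych m x y n (k+j)) y
    exact this
  have hcast : ((2^n - (k+j) : ℕ) : ℝ) = 2^n - (k+j) := by
    push_cast [Nat.cast_sub hl]; ring
  have hpow : (0:ℝ) < 2^n := by positivity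
  have hsum : (k:ℝ) * (dist x y / 2^n) + (j:ℝ) * (dist x y / 2^n)
      + ((2:ℝ)^n - (k+j)) * (dist x y / 2^n) = dist x y := by field_simp; ring
  rw [hcast] at h3
  have : ((k:ℝ)+j) - k = (j:ℝ) := by ring
  push_cast
  rw [show ((k:ℝ)+j) - k = (j:ℝ) by ring]
  rw [show (0:ℕ) + k = k from by omega] at h1
  nlinarith [h1, h2, h3, h4]

include hm in
lemma dych_dist' {n k l : ℕ} (hk : k ≤ 2^n) (hl : l ≤ 2^n) :
    dist (dych m x y n k) (dych m x y n l) = |(k : ℝ) - l| * (dist x y / 2^n) := by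
  rcases le_total k l with h | h
  · rw [dych_dist m x y hm h hl, abs_sub_comm, abs_of_nonneg (by
      have : (k:ℝ) ≤ l := by exact_mod_cast h
      linarith)]
  · rw [dist_comm, dych_dist m x y hm h hk, abs_of_nonneg (by
      have : (l:ℝ) ≤ k := by exact_mod_cast h
      linarith)]

include hm in
lemma dych_dist2 {n N k l : ℕ} (hnN : n ≤ N) (hk : k ≤ 2^n) (hl : l ≤ 2^N) :
    dist (dych m x y n k) (dych m x y N l) =
      |(k : ℝ) * (dist x y / 2^n) - (l : ℝ) * (dist x y / 2^N)| := by
  obtain ⟨j, rfl⟩ : ∃ j, N = n + j := ⟨N - n, by omega⟩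
  rw [← dych_lift m x y n k j]
  have hk' : k * 2^j ≤ 2^(n+j) := by rw [pow_add]; exact Nat.mul_le_mul_right _ hk
  rw [dych_dist' m x y hm hk' hl]
  have hfac : (k:ℝ) * (dist x y / 2^n) = ((k*2^j:ℕ):ℝ) * (dist x y / 2^(n+j)) := by
    push_cast
    rw [pow_add]
    field_simp
  rw [hfac, ← sub_mul, abs_mul,
    abs_of_nonneg (show (0:ℝ) ≤ dist x y / 2^(n+j) by positivity)]

end Dyadic

lemma exists_geodesic_aux {X : Type*} [MetricSpace X] (hc : CompleteSpace X)
    (hmid : ∀ a b : X, ∃ m : X, IsMidpoint a b m) (x y : X) :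
    ∃ γ : ℝ → X, γ 0 = x ∧ γ (dist x y) = y ∧
      ∀ s ∈ Icc (0:ℝ) (dist x y), ∀ t ∈ Icc (0:ℝ) (dist x y),
        dist (γ s) (γ t) = |s - t| := by
  haveI := hc
  rcases eq_or_lt_of_le (dist_nonneg : (0:ℝ) ≤ dist x y) with h0 | hD
  · have hxy : x = y := by rw [← dist_le_zero]; rw [← h0]
    refine ⟨fun _ => x, rfl, hxy, ?_⟩
    rintro s ⟨hs0, hs1⟩ t ⟨ht0, ht1⟩
    rw [← h0] at hs1 ht1
    have hs : s = 0 := le_antisymm hs1 hs0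
    have ht : t = 0 := le_antisymm ht1 ht0
    simp [hs, ht]
  · set D := dist x y with hDdef
    set m : X → X → X := fun a b => (hmid a b).choose with hmdef
    have hm : ∀ a b : X, IsMidpoint a b (m a b) := fun a b => (hmid a b).choose_spec
    set clamp : ℝ → ℝ := fun t => max 0 (min t D) with hclampdef
    have hcl0 : ∀ t, 0 ≤ clamp t := fun t => le_max_left _ _
    have hclD : ∀ t, clamp t ≤ D := fun t => max_le (le_of_lt hD) (min_le_right _ _)
    have hclid : ∀ t ∈ Icc (0:ℝ) D, clamp t = t := by
      rintro t ⟨h1, h2⟩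
      simp only [hclampdef]
      rw [min_eq_left h2, max_eq_right h1]
    set sn : ℕ → ℝ → ℕ := fun n t => ⌊clamp t * 2^n / D⌋₊ with hsndef
    have hsle : ∀ n t, sn n t ≤ 2^n := by
      intro n t
      have h1 : clamp t * 2^n / D ≤ ((2^n : ℕ) : ℝ) := by
        push_cast
        rw [div_le_iff₀ hD]
        nlinarith [hclD t, pow_pos (by norm_num : (0:ℝ) < 2) n]
      calc sn n t ≤ ⌊((2^n : ℕ) : ℝ)⌋₊ := Nat.floor_le_floor h1
        _ = 2^n := Nat.floor_natCast _
    set a : ℕ → ℝ → ℝ := fun n t => (sn n t : ℝ) * (D / 2^n) with hadef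
    have hpow : ∀ n : ℕ, (0:ℝ) < 2^n := fun n => by positivity
    have haub : ∀ (n : ℕ) (t : ℝ), |a n t - clamp t| ≤ D / 2^n := by
      intro n t
      have h1 : (sn n t : ℝ) ≤ clamp t * 2^n / D := Nat.floor_le (by positivity)
      have h2 : clamp t * 2^n / D < (sn n t : ℝ) + 1 := Nat.lt_floor_add_one _
      rw [abs_le]
      have hp := hpow n
      constructor
      · have : clamp t * 2^n < ((sn n t : ℝ) + 1) * D := by
          rw [div_lt_iff₀ hD] at h2; linarith
        simp only [hadef]
        rw [neg_le, neg_sub, sub_le_iff_le_add]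
        have h3 : clamp t ≤ ((sn n t : ℝ) + 1) * D / 2^n := by
          rw [le_div_iff₀ hp]; linarith
        calc clamp t ≤ ((sn n t : ℝ) + 1) * D / 2^n := h3
          _ = D / 2^n + (sn n t : ℝ) * (D / 2^n) := by ring
      · have : (sn n t : ℝ) * D ≤ clamp t * 2^n := by
          rw [le_div_iff₀ hD] at h1; linarith
        simp only [hadef]
        have h3 : (sn n t : ℝ) * (D / 2^n) ≤ clamp t := by
          rw [show (sn n t : ℝ) * (D / 2^n) = (sn n t : ℝ) * D / 2^n by ring,
            div_le_iff₀ hp]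
          linarith
        have h4 : (0:ℝ) ≤ D / 2^n := by positivity
        linarith
    set φ : ℕ → ℝ → X := fun n t => dych m x y n (sn n t) with hφdef
    have hdist : ∀ (t t' : ℝ) (n N : ℕ), n ≤ N →
        dist (φ n t) (φ N t') = |a n t - a N t'| := by
      intro t t' n N hnN
      exact dych_dist2 m x y hm hnN (hsle n t) (hsle N t')
    have hdist' : ∀ (t t' : ℝ) (n : ℕ), dist (φ n t) (φ n t') = |a n t - a n t'| :=
      fun t t' n => hdist t t' n n le_rfl
    have hDn0 : Tendsto (fun n : ℕ => D / 2^n) atTop (𝓝 0) := by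
      have h1 := tendsto_pow_atTop_nhds_zero_of_lt_one
        (by norm_num : (0:ℝ) ≤ 1/2) (by norm_num : (1:ℝ)/2 < 1)
      have h2 := h1.const_mul D
      rw [mul_zero] at h2
      convert h2 using 2 with n
      rw [one_div, inv_pow, div_eq_mul_inv]
    have hcauchy : ∀ t, CauchySeq (fun n => φ n t) := by
      intro t
      apply cauchySeq_of_le_tendsto_0 (fun n => 2 * (D / 2^n))
      · intro n n' N hn hn'
        have hmono : ∀ k l : ℕ, l ≤ k → D / 2^k ≤ D / 2^l := by
          intro k l hlk
          exact div_le_div_of_nonneg_left (le_of_lt hD) (hpow l)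
            (pow_le_pow_right₀ (by norm_num) hlk)
        have key : ∀ k l : ℕ, k ≤ l → dist (φ k t) (φ l t) ≤ D / 2^k + D / 2^l := by
          intro k l hkl
          rw [hdist t t k l hkl]
          calc |a k t - a l t| ≤ |a k t - clamp t| + |clamp t - a l t| := by
                have := abs_sub_le (a k t) (clamp t) (a l t); linarith
            _ ≤ D / 2^k + D / 2^l := by
                rw [abs_sub_comm (clamp t)]
                exact add_le_add (haub k t) (haub l t)
        rcases le_total n n' with h | h
        · calc dist (φ n t) (φ n' t) ≤ D / 2^n + D / 2^n' := key n n' h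
            _ ≤ 2 * (D / 2^N) := by
              have := hmono n N hn; have := hmono n' N hn'; linarith
        · calc dist (φ n t) (φ n' t) = dist (φ n' t) (φ n t) := dist_comm _ _
            _ ≤ D / 2^n' + D / 2^n := key n' n h
            _ ≤ 2 * (D / 2^N) := by
              have := hmono n N hn; have := hmono n' N hn'; linarith
      · have := hDn0.const_mul 2
        rw [mul_zero] at this
        exact this
    have hlim : ∀ t, ∃ p, Tendsto (fun n => φ n t) atTop (𝓝 p) :=
      fun t => cauchySeq_tendsto_of_complete (hcauchy t)
    set γ : ℝ → X := fun t => (hlim t).choose with hγdef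
    have hγ : ∀ t, Tendsto (fun n => φ n t) atTop (𝓝 (γ t)) :=
      fun t => (hlim t).choose_spec
    have hat : ∀ t, Tendsto (fun n => a n t) atTop (𝓝 (clamp t)) := by
      intro t
      rw [tendsto_iff_dist_tendsto_zero]
      exact squeeze_zero (fun n => dist_nonneg)
        (fun n => by rw [Real.dist_eq]; exact haub n t) hDn0
    have hkey : ∀ s t : ℝ, dist (γ s) (γ t) = |clamp s - clamp t| := by
      intro s t
      have h1 : Tendsto (fun n => dist (φ n s) (φ n t)) atTop
          (𝓝 (dist (γ s) (γ t))) := (hγ s).dist (hγ t)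
      have h2 : Tendsto (fun n => |a n s - a n t|) atTop
          (𝓝 (|clamp s - clamp t|)) := ((hat s).sub (hat t)).abs
      have he : (fun n => dist (φ n s) (φ n t)) = fun n => |a n s - a n t| :=
        funext fun n => hdist' s t n
      rw [he] at h1
      exact tendsto_nhds_unique h1 h2
    have hγ0 : γ 0 = x := by
      have hconst : ∀ n, φ n 0 = x := by
        intro n
        have hc0 : clamp 0 = 0 := hclid 0 ⟨le_refl _, le_of_lt hD⟩
        have : sn n 0 = 0 := by
          simp only [hsndef, hc0]
          norm_num
        simp only [hφdef, this]
        exact dych_zero m x y n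
      have : Tendsto (fun n => φ n 0) atTop (𝓝 x) := by
        rw [funext hconst]; exact tendsto_const_nhds
      exact tendsto_nhds_unique (hγ 0) this
    have hγD : γ D = y := by
      have hconst : ∀ n, φ n D = y := by
        intro n
        have hcD : clamp D = D := hclid D ⟨le_of_lt hD, le_refl _⟩
        have h1 : clamp D * 2^n / D = ((2^n : ℕ) : ℝ) := by
          rw [hcD]; push_cast; field_simp
        have : sn n D = 2^n := by
          simp only [hsndef, h1, Nat.floor_natCast]
        simp only [hφdef, this]
        exact dych_top m x y n
      have : Tendsto (fun n => φ n D) atTop (𝓝 y) := by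
        rw [funext hconst]; exact tendsto_const_nhds
      exact tendsto_nhds_unique (hγ D) this
    exact ⟨γ, hγ0, hγD, fun s hs t ht => by rw [hkey, hclid s hs, hclid t ht]⟩

section Proj
variable {X : Type*} [MetricSpace X]

lemma exists_proj (hX : IsCAT0 X) {C : Set X} (hcl : IsClosed C)
    (hco : GeodesicallyConvex C) (hne : C.Nonempty) (x : X) :
    ∃ p ∈ C, dist x p = infDist x C := by
  haveI := hX.1
  set d := infDist x C with hd
  have hd0 : 0 ≤ d := infDist_nonneg
  have hq : ∀ n : ℕ, ∃ q ∈ C, dist x q < d + 1/(n+1) := by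
    intro n
    apply (infDist_lt_iff hne).mp
    have : (0:ℝ) < 1/(n+1) := by positivity
    linarith
  choose q hqC hqd using hq
  have key : ∀ i j : ℕ, dist (q i) (q j) ^ 2 ≤
      2 * dist x (q i) ^ 2 + 2 * dist x (q j) ^ 2 - 4 * d ^ 2 := by
    intro i j
    obtain ⟨γ, h0, hL, hiso⟩ := exists_geodesic_aux hX.1 hX.2.1 (q i) (q j)
    set L := dist (q i) (q j) with hLd
    have hL0 : 0 ≤ L := dist_nonneg
    have hmem2 : L/2 ∈ Icc (0:ℝ) L := ⟨by positivity, by linarith⟩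
    have hmemL : L ∈ Icc (0:ℝ) L := ⟨hL0, le_refl _⟩
    have hmem0 : (0:ℝ) ∈ Icc (0:ℝ) L := ⟨le_refl _, hL0⟩
    have hmemC : γ (L/2) ∈ C :=
      hco _ (hqC i) _ (hqC j) _ ⟨γ, h0, hL, hiso, rfl⟩ ⟨L/2, hmem2, rfl⟩
    have e1 : dist (q i) (γ (L/2)) = L/2 := by
      conv_lhs => rw [← h0]
      rw [hiso 0 hmem0 (L/2) hmem2, zero_sub, abs_neg,
        abs_of_nonneg (by positivity : (0:ℝ) ≤ L/2)]
    have e2 : dist (q j) (γ (L/2)) = L/2 := by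
      conv_lhs => rw [← hL]
      rw [hiso L hmemL (L/2) hmem2]
      rw [show |L - L/2| = |L/2| from by rw [show L - L/2 = L/2 by ring],
        abs_of_nonneg (by positivity : (0:ℝ) ≤ L/2)]
    have hmid : IsMidpoint (q i) (q j) (γ (L/2)) := ⟨e1, e2⟩
    have hCN := hX.2.2 (q i) (q j) x _ hmid
    have hdle : d ≤ dist x (γ (L/2)) := infDist_le_dist_of_mem hmemC
    nlinarith [hCN, hdle, dist_nonneg (x := x) (y := γ (L/2))]
  have hcs : CauchySeq q := by
    rw [Metric.cauchySeq_iff]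
    intro ε hε
    obtain ⟨N, hN⟩ := exists_nat_gt ((8*d+4)/ε^2)
    refine ⟨N, fun i hi j hj => ?_⟩
    have hNc : ((N:ℝ)+1) > 0 := by positivity
    have h1 : (8*d+4)/((N:ℝ)+1) < ε^2 := by
      rw [div_lt_iff₀ hNc]
      rw [div_lt_iff₀ (by positivity : (0:ℝ) < ε^2)] at hN
      nlinarith
    have hi1 : 1/((i:ℝ)+1) ≤ 1/((N:ℝ)+1) := by
      apply div_le_div_of_nonneg_left (by norm_num) hNc
      have : (N:ℝ) ≤ i := by exact_mod_cast hi
      linarith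
    have hj1 : 1/((j:ℝ)+1) ≤ 1/((N:ℝ)+1) := by
      apply div_le_div_of_nonneg_left (by norm_num) hNc
      have : (N:ℝ) ≤ j := by exact_mod_cast hj
      linarith
    have hN1 : 1/((N:ℝ)+1) ≤ 1 := by
      rw [div_le_one hNc]; linarith [Nat.cast_nonneg (α := ℝ) N]
    have hdi := hqd i
    have hdj := hqd j
    have hdi0 : 0 ≤ dist x (q i) := dist_nonneg
    have hdj0 : 0 ≤ dist x (q j) := dist_nonneg
    have hddi : d ≤ dist x (q i) := infDist_le_dist_of_mem (hqC i)
    have hddj : d ≤ dist x (q j) := infDist_le_dist_of_mem (hqC j)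
    have hε0 : (0:ℝ) ≤ 1/((N:ℝ)+1) := by positivity
    have hei : dist x (q i) < d + 1/((N:ℝ)+1) := lt_of_lt_of_le hdi (by linarith)
    have hej : dist x (q j) < d + 1/((N:ℝ)+1) := lt_of_lt_of_le hdj (by linarith)
    have hA : dist x (q i) ^ 2 < (d + 1/((N:ℝ)+1))^2 := by nlinarith [hei, hdi0]
    have hB : dist x (q j) ^ 2 < (d + 1/((N:ℝ)+1))^2 := by nlinarith [hej, hdj0]
    have he2 : (0:ℝ) ≤ (1 - 1/((N:ℝ)+1)) * (1/((N:ℝ)+1)) :=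
      mul_nonneg (by linarith) hε0
    have hE : (d + 1/((N:ℝ)+1))^2
        = d^2 + 2*(d*(1/((N:ℝ)+1))) + (1/((N:ℝ)+1))^2 := by ring
    rw [hE] at hA hB
    have he2' : (1/((N:ℝ)+1))^2 ≤ 1/((N:ℝ)+1) := by nlinarith [hN1, hε0]
    have h8 : (8*d+4) * (1/((N:ℝ)+1)) = (8*d+4)/((N:ℝ)+1) := by ring
    have h2 : dist (q i) (q j) ^ 2 < ε ^ 2 := by
      have hk := key i j
      linarith [hA, hB, h1, he2', h8, hd0]
    exact lt_of_pow_lt_pow_left₀ 2 (le_of_lt hε) h2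
  obtain ⟨p, hp⟩ := cauchySeq_tendsto_of_complete hcs
  have hpC : p ∈ C := hcl.mem_of_tendsto hp (Eventually.of_forall hqC)
  refine ⟨p, hpC, le_antisymm ?_ (infDist_le_dist_of_mem hpC)⟩
  have ht1 : Tendsto (fun n : ℕ => dist x (q n)) atTop (𝓝 (dist x p)) :=
    tendsto_const_nhds.dist hp
  have ht2 : Tendsto (fun n : ℕ => d + 1/((n:ℝ)+1)) atTop (𝓝 d) := by
    have h := (tendsto_const_nhds (x := d) (f := atTop (α := ℕ))).add
      tendsto_one_div_add_atTop_nhds_zero_nat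
    rwa [add_zero] at h
  exact le_of_tendsto_of_tendsto ht1 ht2
    (Eventually.of_forall fun n => le_of_lt (hqd n))

lemma obtuse (hX : IsCAT0 X) {C : Set X} (hco : GeodesicallyConvex C) {x p : X}
    (hpC : p ∈ C) (hmin : ∀ q ∈ C, dist x p ≤ dist x q) {z : X} (hz : z ∈ C) :
    dist x p ^ 2 + dist p z ^ 2 ≤ dist x z ^ 2 := by
  obtain ⟨γ, h0, hL, hiso⟩ := exists_geodesic_aux hX.1 hX.2.1 p z
  set L := dist p z with hLd
  have hL0 : 0 ≤ L := dist_nonneg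
  set w : ℕ → X := fun n => γ (L / 2^n) with hwdef
  have hpow : ∀ n : ℕ, (0:ℝ) < 2^n := fun n => by positivity
  have h2pow : ∀ n : ℕ, (1:ℝ) ≤ 2^n := by
    intro n
    calc (1:ℝ) = 2^0 := by norm_num
      _ ≤ 2^n := pow_le_pow_right₀ (by norm_num) (Nat.zero_le n)
  have hmem : ∀ n : ℕ, L / 2^n ∈ Icc (0:ℝ) L := by
    intro n
    refine ⟨by positivity, ?_⟩
    rw [div_le_iff₀ (hpow n)]
    nlinarith [h2pow n]
  have hmem0 : (0:ℝ) ∈ Icc (0:ℝ) L := ⟨le_refl _, hL0⟩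
  have hwC : ∀ n, w n ∈ C :=
    fun n => hco _ hpC _ hz _ ⟨γ, h0, hL, hiso, rfl⟩ ⟨L/2^n, hmem n, rfl⟩
  have hw0 : w 0 = z := by
    simp only [hwdef, pow_zero, div_one]
    exact hL
  have hdpw : ∀ n, dist p (w n) = L / 2^n := by
    intro n
    rw [← h0]
    show dist (γ 0) (γ (L/2^n)) = L / 2^n
    rw [hiso 0 hmem0 _ (hmem n), zero_sub, abs_neg, abs_of_nonneg (by positivity)]
  have hdww : ∀ n, dist (w n) (w (n+1)) = L / 2^(n+1) := by
    intro n
    show dist (γ (L/2^n)) (γ (L/2^(n+1))) = L / 2^(n+1)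
    rw [hiso _ (hmem n) _ (hmem (n+1))]
    rw [show L/2^n - L/2^(n+1) = L/2^(n+1) from by rw [pow_succ]; field_simp; ring]
    rw [abs_of_nonneg (by positivity : (0:ℝ) ≤ L/2^(n+1))]
  have hmidw : ∀ n, IsMidpoint p (w n) (w (n+1)) := by
    intro n
    constructor
    · rw [hdpw (n+1), hdpw n, pow_succ]; ring
    · rw [hdww n, hdpw n, pow_succ]; ring
  have key : ∀ n : ℕ, dist x p^2 + (1 - (1/2:ℝ)^n) * L^2
      + 2^n * (dist x (w n)^2 - dist x p^2) ≤ dist x z^2 := by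
    intro n
    induction n with
    | zero =>
        simp only [pow_zero, hw0]
        nlinarith [sq_nonneg (dist x p)]
    | succ n ih =>
        have hCNn := hX.2.2 p (w n) x (w (n+1)) (hmidw n)
        rw [hdpw n] at hCNn
        have hPpos := hpow n
        have hQ : (1/2:ℝ)^n = 1/2^n := by rw [one_div, inv_pow, one_div]
        have hLQ : (L / 2^n)^2 = L^2 * ((1/2:ℝ)^n)^2 := by
          rw [hQ]; ring
        rw [hLQ] at hCNn
        have h5 := mul_le_mul_of_nonneg_left hCNn (le_of_lt hPpos)
        have h6 : (2:ℝ)^n * (((1/2:ℝ)^n)^2) = (1/2:ℝ)^n := by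
          rw [hQ]; field_simp
        have h7 : (2:ℝ)^n * (L^2 * ((1/2:ℝ)^n)^2) = L^2 * (1/2:ℝ)^n := by
          calc (2:ℝ)^n * (L^2 * ((1/2:ℝ)^n)^2)
              = L^2 * ((2:ℝ)^n * ((1/2:ℝ)^n)^2) := by ring
            _ = L^2 * (1/2:ℝ)^n := by rw [h6]
        have hexp1 : ((1:ℝ)/2)^(n+1) = (1/2:ℝ)^n/2 := by rw [pow_succ]; ring
        have hexp2 : ((2:ℝ))^(n+1) = 2 * 2^n := by rw [pow_succ]; ring
        rw [hexp1, hexp2]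
        nlinarith [ih, h5, h7]
  have hfin : ∀ n : ℕ, dist x p^2 + (1 - (1/2:ℝ)^n) * L^2 ≤ dist x z^2 := by
    intro n
    have hb : dist x p ≤ dist x (w n) := hmin _ (hwC n)
    have hb2 : dist x p^2 ≤ dist x (w n)^2 := by
      nlinarith [dist_nonneg (x := x) (y := p)]
    have hk := key n
    nlinarith [hpow n]
  have hlim : Tendsto (fun n : ℕ => dist x p^2 + (1 - (1/2:ℝ)^n) * L^2) atTop
      (𝓝 (dist x p^2 + L^2)) := by
    have h1 := tendsto_pow_atTop_nhds_zero_of_lt_one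
      (by norm_num : (0:ℝ) ≤ 1/2) (by norm_num : (1:ℝ)/2 < 1)
    have h2 : Tendsto (fun n : ℕ => (1 - (1/2:ℝ)^n) * L^2) atTop
        (𝓝 ((1 - 0) * L^2)) := (tendsto_const_nhds.sub h1).mul tendsto_const_nhds
    have h3 := (tendsto_const_nhds (x := dist x p^2) (f := atTop (α := ℕ))).add h2
    norm_num at h3
    exact h3
  exact le_of_tendsto' hlim hfin

end Proj

lemma weakConv_of_tendsto {X : Type*} [MetricSpace X] {u : ℕ → X} {x : X}
    (h : Tendsto u atTop (𝓝 x)) : WeakConv u x := by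
  rintro G ⟨L, γ, hL0, hγ0, hiso, rfl⟩ p hp
  have hxG : x ∈ γ '' Icc (0:ℝ) L := ⟨0, ⟨le_refl _, hL0⟩, hγ0⟩
  rw [tendsto_iff_dist_tendsto_zero]
  have hb : ∀ i, dist (p i) x ≤ 2 * dist (u i) x := by
    intro i
    have h1 := (hp i).2 x hxG
    calc dist (p i) x ≤ dist (p i) (u i) + dist (u i) x := dist_triangle _ _ _
      _ ≤ 2 * dist (u i) x := by rw [dist_comm (p i) (u i)]; linarith
  have hu : Tendsto (fun i => 2 * dist (u i) x) atTop (𝓝 0) := by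
    have h1 := (tendsto_iff_dist_tendsto_zero.mp h).const_mul 2
    rwa [mul_zero] at h1
  exact squeeze_zero (fun i => dist_nonneg) hb hu

lemma tdeltaClosed_of_closed_convex {X : Type*} [MetricSpace X] (hX : IsCAT0 X)
    {C : Set X} (hcl : IsClosed C) (hco : GeodesicallyConvex C) :
    TdeltaClosed C := by
  intro u huC hb x hw
  by_contra hx
  have hne : C.Nonempty := ⟨u 0, huC 0⟩
  have hd : 0 < infDist x C := (hcl.notMem_iff_infDist_pos hne).mp hx
  obtain ⟨p, hpC, hpd⟩ := exists_proj hX hcl hco hne x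
  have hmin : ∀ q ∈ C, dist x p ≤ dist x q := fun q hq =>
    hpd ▸ infDist_le_dist_of_mem hq
  obtain ⟨γ, h0, hL, hiso⟩ := exists_geodesic_aux hX.1 hX.2.1 x p
  set L := dist x p with hLdef
  have hL0 : 0 ≤ L := dist_nonneg
  have hLpos : 0 < L := by rw [hpd]; exact hd
  set G := γ '' Icc (0:ℝ) L with hGdef
  have hGfrom : IsGeodesicSegmentFrom x G := ⟨L, γ, hL0, h0, hiso, rfl⟩
  have hcont : ContinuousOn γ (Icc (0:ℝ) L) := by
    apply LipschitzOnWith.continuousOn (K := 1)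
    apply LipschitzOnWith.of_dist_le_mul
    intro s hs t ht
    rw [hiso s hs t ht, ← Real.dist_eq]
    simp
  have hGc : IsCompact G := isCompact_Icc.image_of_continuousOn hcont
  have hGne : G.Nonempty := ⟨x, 0, ⟨le_refl _, hL0⟩, h0⟩
  have hnear : ∀ n, ∃ pn, IsNearestPoint (u n) G pn := by
    intro n
    obtain ⟨pn, hpn, hmin2⟩ := hGc.exists_isMinOn hGne
      (f := fun q => dist (u n) q) ((continuous_const.dist continuous_id).continuousOn)
    exact ⟨pn, hpn, fun q hq => hmin2 hq⟩
  choose π hπ using hnear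
  have hconv : Tendsto π atTop (𝓝 x) := hw G hGfrom π hπ
  have hpG : p ∈ G := ⟨L, ⟨hL0, le_refl _⟩, hL⟩
  obtain ⟨r, hr⟩ := hb.subset_closedBall p
  set M := max r 0 with hM
  have hM0 : 0 ≤ M := le_max_right _ _
  have hMu : ∀ n, dist (u n) p ≤ M := by
    intro n
    have h1 := hr (mem_range_self n)
    rw [mem_closedBall] at h1
    exact le_trans h1 (le_max_left _ _)
  set δ := min 1 (L^2 / (2*M + 2)) with hδ
  have hδpos : 0 < δ :=
    lt_min one_pos (div_pos (pow_pos hLpos 2) (by linarith))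
  obtain ⟨n, hn⟩ := (Tendsto.eventually_lt_const hδpos
    (tendsto_iff_dist_tendsto_zero.mp hconv)).exists
  have hob := obtuse hX hco hpC hmin (huC n)
  have hxu : dist x (u n) ≤ dist (π n) x + dist p (u n) := by
    calc dist x (u n) ≤ dist x (π n) + dist (π n) (u n) := dist_triangle _ _ _
      _ ≤ dist (π n) x + dist p (u n) := by
        rw [dist_comm x (π n), dist_comm (π n) (u n), dist_comm p (u n)]
        have := (hπ n).2 p hpG
        linarith
  have hxu2 : dist x (u n)^2 ≤ (dist (π n) x + dist p (u n))^2 := by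
    have h1 : (0:ℝ) ≤ dist x (u n) := dist_nonneg
    nlinarith [hxu]
  have he0 : (0:ℝ) ≤ dist (π n) x := dist_nonneg
  have he1 : dist (π n) x < 1 := lt_of_lt_of_le hn (min_le_left _ _)
  have he2 : dist (π n) x < L^2/(2*M+2) := lt_of_lt_of_le hn (min_le_right _ _)
  have he3 : dist (π n) x * (2*M+2) < L^2 :=
    (lt_div_iff₀ (by linarith : (0:ℝ) < 2*M+2)).mp he2
  have hm'M : dist p (u n) ≤ M := by rw [dist_comm]; exact hMu n
  have hm'0 : (0:ℝ) ≤ dist p (u n) := dist_nonneg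
  have hL2 : L^2 = dist x p ^ 2 := by rw [hLdef]
  nlinarith [hob, hxu2, he0, he1, he3, hm'M, hm'0, hM0, hL2]


/-- The weak topology `T_Δ` is finer than the coconvex
topology `T_co` and coarser than the metric topology. -/
theorem coconvex_le_weak_le_metric (X : Type*) [MetricSpace X] (hX : IsCAT0 X)
    (TΔ : TopologicalSpace X) (hTΔ : IsWeakTopology TΔ) :
    (∀ U : Set X, @IsOpen X (coconvexTopology X) U → @IsOpen X TΔ U) ∧
    (∀ U : Set X, @IsOpen X TΔ U → IsOpen U) := by
  haveI := hX.1
  constructor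
  · intro U hU
    have hle : TΔ ≤ coconvexTopology X := by
      apply le_generateFrom
      rintro s ⟨C, hcl, hco, rfl⟩
      have h1 : TdeltaClosed C := tdeltaClosed_of_closed_convex hX hcl hco
      have h2 : @IsClosed X TΔ C := (hTΔ C).mpr h1
      exact h2.isOpen_compl
    exact hle U hU
  · intro U hU
    first
      | exact hU
      | · have h1 : @IsClosed X TΔ Uᶜ := (@isClosed_compl_iff X TΔ U).mpr hU
          have h2 : TdeltaClosed Uᶜ := (hTΔ _).mp h1
          have h3 : @IsSeqClosed X UniformSpace.toTopologicalSpace Uᶜ := by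
            intro v q hv hvq
            exact h2 v hv hvq.cauchySeq.isBounded_range q (weakConv_of_tendsto hvq)
          have h4 : @IsClosed X UniformSpace.toTopologicalSpace Uᶜ :=
            @IsSeqClosed.isClosed X UniformSpace.toTopologicalSpace
              (by exact inferInstance) Uᶜ h3
          exact (@isClosed_compl_iff X UniformSpace.toTopologicalSpace U).mp h4
end
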